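/- arXiv:2604.08918 — 2 statements merged into one kernel-verified Lean document; each statement's English description precedes it below -/
import Mathlib

section
/- Let r be a probability distribution on the four CHSH input pairs {0,1}², and let a deterministic local strategy win on input (x,y) according to the CHSH predicate. Then the r-weighted win probability Σ_{(x,y)} r(x,y)·W(x,y) is at most 1 − min_{(x,y)} r(x,y). Moreover, this bound extends to all convex mixtures of deterministic local strategies. -/
open Finset

def chshSign (x y : Bool) : ℤ := if x = false ∧ y = false then -1 else 1

/-- Win indicator of a deterministic strategy on input `(x,y)`. -/
noncomputable def winInd (a b : Bool → ℤ) (p : Bool × Bool) : ℝ :=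
  if a p.1 * b p.2 = chshSign p.1 p.2 then 1 else 0

lemma exists_lose (a b : Bool → ℤ) (ha : ∀ x, a x = 1 ∨ a x = -1)
    (hb : ∀ y, b y = 1 ∨ b y = -1) : ∃ p : Bool × Bool, winInd a b p = 0 := by
  by_contra h
  push_neg at h
  have hw : ∀ p : Bool × Bool, a p.1 * b p.2 = chshSign p.1 p.2 := by
    intro p
    by_contra hc
    exact h p (by simp [winInd, hc])
  have h00 := hw (false, false)
  have h01 := hw (false, true)
  have h10 := hw (true, false)
  have h11 := hw (true, true)
  simp [chshSign] at h00 h01 h10 h11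
  rcases ha false with h1 | h1 <;> rcases ha true with h2 | h2 <;>
    rcases hb false with h3 | h3 <;> rcases hb true with h4 | h4 <;>
    simp [h1, h2, h3, h4] at h00 h01 h10 h11

lemma single (r : Bool × Bool → ℝ) (hr0 : ∀ p, 0 ≤ r p) (hr1 : ∑ p, r p = 1)
    (a b : Bool → ℤ) (ha : ∀ x, a x = 1 ∨ a x = -1) (hb : ∀ y, b y = 1 ∨ b y = -1) :
    ∑ p, r p * winInd a b p ≤ 1 - Finset.univ.inf' Finset.univ_nonempty r := by
  obtain ⟨q, hq⟩ := exists_lose a b ha hb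
  have hle : ∑ p, r p * winInd a b p ≤ ∑ p ∈ Finset.univ.erase q, r p := by
    rw [← Finset.add_sum_erase _ _ (Finset.mem_univ q), hq, mul_zero, zero_add]
    refine Finset.sum_le_sum fun p _ => ?_
    have : winInd a b p ≤ 1 := by unfold winInd; split <;> norm_num
    calc r p * winInd a b p ≤ r p * 1 := by
          exact mul_le_mul_of_nonneg_left this (hr0 p)
      _ = r p := mul_one _
  have : ∑ p ∈ Finset.univ.erase q, r p = 1 - r q := by
    rw [← hr1, ← Finset.add_sum_erase _ _ (Finset.mem_univ q)]; ring
  rw [this] at hle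
  have hmin : Finset.univ.inf' Finset.univ_nonempty r ≤ r q :=
    Finset.inf'_le _ (Finset.mem_univ q)
  linarith

/-- The `r`-weighted CHSH win probability of any deterministic local strategy is at most
`1 - min r`, and the same bound holds for every convex mixture of deterministic strategies. -/
theorem stmt_5 (r : Bool × Bool → ℝ) (hr0 : ∀ p, 0 ≤ r p) (hr1 : ∑ p, r p = 1) :
    (∀ a b : Bool → ℤ, (∀ x, a x = 1 ∨ a x = -1) → (∀ y, b y = 1 ∨ b y = -1) →
      ∑ p, r p * winInd a b p ≤ 1 - Finset.univ.inf' Finset.univ_nonempty r) ∧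
    (∀ (n : ℕ) (w : Fin n → ℝ) (A B : Fin n → Bool → ℤ),
      (∀ i, 0 ≤ w i) → ∑ i, w i = 1 →
      (∀ i x, A i x = 1 ∨ A i x = -1) → (∀ i y, B i y = 1 ∨ B i y = -1) →
      ∑ i, w i * ∑ p, r p * winInd (A i) (B i) p ≤
        1 - Finset.univ.inf' Finset.univ_nonempty r) := by
  refine ⟨fun a b ha hb => single r hr0 hr1 a b ha hb, ?_⟩
  intro n w A B hw0 hw1 hA hB
  calc ∑ i, w i * ∑ p, r p * winInd (A i) (B i) p
      ≤ ∑ i, w i * (1 - Finset.univ.inf' Finset.univ_nonempty r) := by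
        refine Finset.sum_le_sum fun i _ =>
          mul_le_mul_of_nonneg_left (single r hr0 hr1 _ _ (hA i) (hB i)) (hw0 i)
    _ = 1 - Finset.univ.inf' Finset.univ_nonempty r := by
        rw [← Finset.sum_mul, hw1, one_mul]
end

section
/- In the CHSH scenario with uniform inputs, for every local model Q (a convex mixture of deterministic strategies) and every observed distribution P with win rate ω(P) ≥ 3/4, the KL divergence from the full trial distribution to the local set satisfies inf_{Q ∈ L} D_KL(P‖Q) ≥ D_KL(Bern(ω(P)) ‖ Bern(3/4)). -/
/-!
Coarse-graining a trial to its win indicator can only decrease relative entropy (by the log-sum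
inequality), so `D(P ‖ Q) ≥ D(Bern ω(P) ‖ Bern ω(Q))`. A deterministic strategy wins on at
most three of the four input pairs, hence `ω(Q) ≤ 3/4` for every local `Q`; since
`q ↦ D(Bern p ‖ Bern q)` is decreasing on `(0, p]` and `ω(Q) ≤ 3/4 ≤ ω(P)`, the bound
`D(Bern ω(P) ‖ Bern (3/4))` follows.
-/

open Finset

noncomputable def klDiv {Z : Type*} [Fintype Z] (P Q : Z → ℝ) : EReal :=
  if ∀ z, 0 < P z → 0 < Q z then
    ((∑ z, P z * Real.log (P z / Q z) : ℝ) : EReal)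
  else ⊤

noncomputable def bernKL (p q : ℝ) : ℝ :=
  p * Real.log (p / q) + (1 - p) * Real.log ((1 - p) / (1 - q))

/-- Full CHSH trial alphabet: inputs `(x,y)` and outputs `(a,b)`, outputs encoded as
Booleans (`true ↦ +1`, `false ↦ -1`). -/
abbrev Trial := (Bool × Bool) × (Bool × Bool)

/-- Win predicate: the output product equals the CHSH sign `g(x,y)`
(`g(0,0) = -1`, `g = +1` otherwise); the product is `+1` iff the outputs agree. -/
def chshWin (z : Trial) : Prop :=
  (z.2.1 = z.2.2) ↔ ¬(z.1.1 = false ∧ z.1.2 = false)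

instance : DecidablePred chshWin := fun z => by unfold chshWin; infer_instance

/-- Win rate of a distribution on the full trial alphabet. -/
noncomputable def winRate (P : Trial → ℝ) : ℝ :=
  ∑ z ∈ Finset.univ.filter chshWin, P z

/-- Local models with uniform inputs: convex mixtures of deterministic strategies. -/
def LocalSet : Set (Trial → ℝ) :=
  {Q | ∃ (n : ℕ) (w : Fin n → ℝ) (A B : Fin n → Bool → Bool),
    (∀ i, 0 ≤ w i) ∧ ∑ i, w i = 1 ∧
    ∀ z : Trial, Q z = (1/4) * ∑ i, w i *
      (if z.2.1 = A i z.1.1 ∧ z.2.2 = B i z.1.2 then 1 else 0)}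

open Real

section LogSum

variable {Z : Type*}

theorem Finset.sum_mul_log_div_sum_le_sum_mul_log_div (s : Finset Z) {a b : Z → ℝ}
    (ha : ∀ z ∈ s, 0 ≤ a z) (hb : ∀ z ∈ s, 0 ≤ b z) (hab : ∀ z ∈ s, 0 < a z → 0 < b z) :
    (∑ z ∈ s, a z) * log ((∑ z ∈ s, a z) / ∑ z ∈ s, b z) ≤ ∑ z ∈ s, a z * log (a z / b z) := by
  set A := ∑ z ∈ s, a z
  set B := ∑ z ∈ s, b z
  rcases (sum_nonneg ha).eq_or_lt with hA | hA
  · have ha0 : ∀ z ∈ s, a z = 0 := (sum_eq_zero_iff_of_nonneg ha).1 hA.symm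
    rw [show A = 0 from hA.symm, zero_mul]
    exact sum_nonneg fun z hz => by simp [ha0 z hz]
  obtain ⟨z₀, hz₀, ha₀⟩ := exists_lt_of_sum_lt (by simpa using hA : ∑ z ∈ s, (0 : ℝ) < A)
  have hB : 0 < B := sum_pos' hb ⟨z₀, hz₀, hab z₀ hz₀ ha₀⟩
  -- Termwise `1 - x⁻¹ ≤ log x` at `x = (a B) / (b A)`; the left-hand sides sum to `A - A = 0`.
  have termwise : ∀ z ∈ s, a z - b z * (A / B) ≤ a z * log (a z / b z) - a z * log (A / B) := by
    intro z hz
    rcases (ha z hz).eq_or_lt with ha0 | hapos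
    · rw [← ha0]
      simpa using mul_nonneg (hb z hz) (div_nonneg hA.le hB.le)
    have hbpos := hab z hz hapos
    have key := one_sub_inv_le_log_of_pos (x := a z * B / (b z * A)) (by positivity)
    rw [log_div (by positivity) (by positivity), log_mul hapos.ne' hB.ne',
      log_mul hbpos.ne' hA.ne', inv_div] at key
    rw [log_div hapos.ne' hbpos.ne', log_div hA.ne' hB.ne']
    have : a z * (1 - b z * A / (a z * B)) = a z - b z * (A / B) := by field_simp
    linarith [mul_le_mul_of_nonneg_left key hapos.le]
  have hsum := sum_le_sum termwise
  rwa [sum_sub_distrib, sum_sub_distrib, ← sum_mul, ← sum_mul, mul_div_cancel₀ _ hB.ne', sub_self,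
    sub_nonneg] at hsum

theorem sum_pos_of_absolutelyContinuous (s : Finset Z) {P Q : Z → ℝ} (hQ : ∀ z, 0 ≤ Q z)
    (hPQ : ∀ z, 0 < P z → 0 < Q z) (hs : 0 < ∑ z ∈ s, P z) : 0 < ∑ z ∈ s, Q z := by
  obtain ⟨z, hz, hPz⟩ := exists_lt_of_sum_lt (by simpa using hs : ∑ z ∈ s, (0 : ℝ) < ∑ z ∈ s, P z)
  exact sum_pos' (fun z _ => hQ z) ⟨z, hz, hPQ z hPz⟩

variable [Fintype Z] [DecidableEq Z]

/-- Data processing for the coarse-graining `z ↦ 1{z ∈ s}`. -/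
theorem bernKL_sum_le_sum_mul_log_div (s : Finset Z) {P Q : Z → ℝ} (hP : ∀ z, 0 ≤ P z)
    (hQ : ∀ z, 0 ≤ Q z) (hPQ : ∀ z, 0 < P z → 0 < Q z) (hP1 : ∑ z, P z = 1)
    (hQ1 : ∑ z, Q z = 1) :
    bernKL (∑ z ∈ s, P z) (∑ z ∈ s, Q z) ≤ ∑ z, P z * log (P z / Q z) := by
  have compl_eq : ∀ f : Z → ℝ, ∑ z, f z = 1 → 1 - ∑ z ∈ s, f z = ∑ z ∈ sᶜ, f z := fun f hf => by
    rw [← hf, ← sum_add_sum_compl s f, add_sub_cancel_left]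
  rw [bernKL, compl_eq P hP1, compl_eq Q hQ1, ← sum_add_sum_compl s]
  exact add_le_add
    (sum_mul_log_div_sum_le_sum_mul_log_div s (fun z _ => hP z) (fun z _ => hQ z) fun z _ => hPQ z)
    (sum_mul_log_div_sum_le_sum_mul_log_div sᶜ (fun z _ => hP z) (fun z _ => hQ z) fun z _ => hPQ z)

end LogSum

section BernoulliKL

theorem mul_log_div_sub_mul_log_div (a : ℝ) {b c : ℝ} (hb : 0 < b) (hc : 0 < c) :
    a * log (a / b) - a * log (a / c) = a * log (c / b) := by
  rcases eq_or_ne a 0 with rfl | ha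
  · simp
  rw [log_div ha hb.ne', log_div ha hc.ne', log_div hc.ne' hb.ne']
  ring

theorem bernKL_le_bernKL_of_le {p q r : ℝ} (hq : 0 < q) (hqr : q ≤ r) (hrp : r ≤ p) (hp : p ≤ 1)
    (hr : r < 1) : bernKL p r ≤ bernKL p q := by
  have hr0 : 0 < r := hq.trans_le hqr
  have hq1 : 0 < 1 - q := by linarith
  have hr1 : 0 < 1 - r := by linarith
  have h₁ := one_sub_inv_le_log_of_pos (div_pos hr0 hq)
  have h₂ := one_sub_inv_le_log_of_pos (div_pos hr1 hq1)
  rw [inv_div] at h₁ h₂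
  have lower : 0 ≤ p * (1 - q / r) + (1 - p) * (1 - (1 - q) / (1 - r)) := by
    have : p * (1 - q / r) + (1 - p) * (1 - (1 - q) / (1 - r)) =
        (r - q) * (p - r) / (r * (1 - r)) := by
      field_simp
      ring
    rw [this]
    exact div_nonneg (mul_nonneg (by linarith) (by linarith)) (mul_pos hr0 hr1).le
  have hdiff : bernKL p q - bernKL p r = p * log (r / q) + (1 - p) * log ((1 - r) / (1 - q)) := by
    rw [bernKL, bernKL, ← mul_log_div_sub_mul_log_div p hq hr0,
      ← mul_log_div_sub_mul_log_div (1 - p) hq1 hr1]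
    ring
  linarith [mul_le_mul_of_nonneg_left h₁ (by linarith : 0 ≤ p),
    mul_le_mul_of_nonneg_left h₂ (by linarith : 0 ≤ 1 - p)]

end BernoulliKL

section CHSH

theorem card_filter_deterministic (a b : Bool → Bool) :
    #(univ.filter fun z : Trial => z.2.1 = a z.1.1 ∧ z.2.2 = b z.1.2) = 4 := by
  revert a b
  decide

/-- The CHSH inequality for deterministic strategies. -/
theorem card_filter_chshWin_deterministic_le (a b : Bool → Bool) :
    #((univ.filter chshWin).filter fun z : Trial => z.2.1 = a z.1.1 ∧ z.2.2 = b z.1.2) ≤ 3 := by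
  revert a b
  decide

theorem sum_mixture_eq {n : ℕ} (w : Fin n → ℝ) (A B : Fin n → Bool → Bool) (t : Finset Trial) :
    ∑ z ∈ t, (1/4) * ∑ i, w i * (if z.2.1 = A i z.1.1 ∧ z.2.2 = B i z.1.2 then 1 else 0) =
      (1/4) * ∑ i, w i * #(t.filter fun z => z.2.1 = A i z.1.1 ∧ z.2.2 = B i z.1.2) := by
  rw [← mul_sum, sum_comm]
  simp only [← mul_sum, sum_boole]

namespace LocalSet

variable {Q : Trial → ℝ}

theorem nonneg (hQ : Q ∈ LocalSet) (z : Trial) : 0 ≤ Q z := by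
  obtain ⟨n, w, A, B, hw0, -, hQ⟩ := hQ
  rw [hQ z]
  exact mul_nonneg (by norm_num) (sum_nonneg fun i _ => mul_nonneg (hw0 i) (by positivity))

theorem sum_eq_one (hQ : Q ∈ LocalSet) : ∑ z, Q z = 1 := by
  obtain ⟨n, w, A, B, -, hw1, hQ⟩ := hQ
  simp only [hQ, sum_mixture_eq, card_filter_deterministic, ← sum_mul, hw1]
  norm_num

theorem winRate_le (hQ : Q ∈ LocalSet) : winRate Q ≤ 3/4 := by
  obtain ⟨n, w, A, B, hw0, hw1, hQ⟩ := hQ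
  have hwins : ∑ i, w i * (#((univ.filter chshWin).filter
      fun z : Trial => z.2.1 = A i z.1.1 ∧ z.2.2 = B i z.1.2) : ℝ) ≤ ∑ i, w i * 3 :=
    sum_le_sum fun i _ => mul_le_mul_of_nonneg_left
      (by exact_mod_cast card_filter_chshWin_deterministic_le (A i) (B i)) (hw0 i)
  rw [← sum_mul, hw1] at hwins
  simp only [winRate, hQ, sum_mixture_eq]
  linarith

end LocalSet

theorem sum_eq_one_of_uniform_inputs {P : Trial → ℝ}
    (hunif : ∀ x y : Bool, ∑ ab : Bool × Bool, P ((x, y), ab) = 1/4) : ∑ z, P z = 1 := by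
  simp only [Fintype.sum_prod_type, hunif]
  norm_num

end CHSH

/-- CHSH witness lower bound on the KL gap to locality, uniform inputs. -/
theorem stmt_7 (P : Trial → ℝ) (hP0 : ∀ z, 0 ≤ P z)
    (hunif : ∀ x y : Bool, ∑ ab : Bool × Bool, P ((x, y), ab) = 1/4)
    (hω : 3/4 ≤ winRate P) :
    ((bernKL (winRate P) (3/4) : ℝ) : EReal) ≤ ⨅ Q ∈ LocalSet, klDiv P Q := by
  have hP1 := sum_eq_one_of_uniform_inputs hunif
  have hωP : winRate P ≤ 1 := hP1 ▸ sum_le_univ_sum_of_nonneg hP0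
  refine le_iInf₂ fun Q hQ => ?_
  rw [klDiv]
  split_ifs with hPQ
  · have hωQ : 0 < winRate Q :=
      sum_pos_of_absolutelyContinuous _ (LocalSet.nonneg hQ) hPQ (lt_of_lt_of_le (by norm_num) hω)
    exact EReal.coe_le_coe_iff.2 <|
      (bernKL_le_bernKL_of_le hωQ (LocalSet.winRate_le hQ) hω hωP (by norm_num)).trans
        (bernKL_sum_le_sum_mul_log_div _ hP0 (LocalSet.nonneg hQ) hPQ hP1 (LocalSet.sum_eq_one hQ))
  · exact le_top
end
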